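/- Let A be a σ-subnormal subgroup of a finite group G, and suppose A is a σ_i-group. Then A ≤ O_{σ_i}(G); that is, A is contained in the largest normal σ_i-subgroup of G. -/

import Mathlib

open Subgroup Pointwise

/-- A finite group (or any type) is a `π`-group if every prime dividing its
cardinality belongs to `π`. -/
def IsPiGroup (π : Set ℕ) (X : Type*) : Prop :=
  ∀ p : ℕ, p.Prime → p ∣ Nat.card X → p ∈ π

/-- The complementary set of primes `π'`. -/
def primeCompl (π : Set ℕ) : Set ℕ := {p : ℕ | p.Prime ∧ p ∉ π}

/-- `σ : I → Set ℕ` is a partition of the set of all primes: the `σ i` consist of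
primes, and every prime belongs to exactly one `σ i` (so they are pairwise
disjoint and their union is the set of all primes). -/
def IsPrimePartition {I : Type*} (σ : I → Set ℕ) : Prop :=
  (∀ i, ∀ p ∈ σ i, p.Prime) ∧ ∀ p : ℕ, p.Prime → ∃! i, p ∈ σ i

/-- A group is `σ`-primary if it is a `σ i`-group for some `i`. -/
def IsSigmaPrimary {I : Type*} (σ : I → Set ℕ) (X : Type*) : Prop :=
  ∃ i, IsPiGroup (σ i) X

/-- `σ (n)`: the set of indices `i` such that `σ i` contains a prime dividing `n`. -/
def sigmaOf {I : Type*} (σ : I → Set ℕ) (n : ℕ) : Set I :=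
  {i | ∃ p : ℕ, p.Prime ∧ p ∈ σ i ∧ p ∣ n}

/-- `A` is a modular subgroup of `G` (a modular element of the subgroup lattice). -/
def IsModularSubgroup {G : Type*} [Group G] (A : Subgroup G) : Prop :=
  (∀ X Z : Subgroup G, X ≤ Z → X ⊔ (A ⊓ Z) = (X ⊔ A) ⊓ Z) ∧
  (∀ Y Z : Subgroup G, A ≤ Z → A ⊔ (Y ⊓ Z) = (A ⊔ Y) ⊓ Z)

/-- `A` is `σ`-subnormal in `G`: there is a chain `A = A₀ ≤ A₁ ≤ ⋯ ≤ Aₙ = G`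
such that each `A i` is normal in `A (i+1)` or `A (i+1) / (A i)_{A (i+1)}` is
`σ`-primary. -/
def IsSigmaSubnormal {I : Type*} (σ : I → Set ℕ) {G : Type*} [Group G]
    (A : Subgroup G) : Prop :=
  ∃ (n : ℕ) (c : Fin (n + 1) → Subgroup G),
    c 0 = A ∧ c (Fin.last n) = ⊤ ∧
    ∀ i : Fin n,
      c i.castSucc ≤ c i.succ ∧
        (((c i.castSucc).subgroupOf (c i.succ)).Normal ∨
          IsSigmaPrimary σ
            (c i.succ ⧸ ((c i.castSucc).subgroupOf (c i.succ)).normalCore))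

/-- `A` is `σ`-quasinormal in `G` if it is modular and `σ`-subnormal in `G`. -/
def IsSigmaQuasinormal {I : Type*} (σ : I → Set ℕ) {G : Type*} [Group G]
    (A : Subgroup G) : Prop :=
  IsModularSubgroup A ∧ IsSigmaSubnormal σ A

/-- `H` is a Hall `π`-subgroup of `G`: `|H|` is a `π`-number and `[G : H]` has no
prime divisors in `π`. -/
def IsHallPiSubgroup (π : Set ℕ) {G : Type*} [Group G] (H : Subgroup G) : Prop :=
  IsPiGroup π H ∧ ∀ p : ℕ, p.Prime → p ∣ H.index → p ∉ π

/-- Two subgroups permute if `AB = BA` as sets. -/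
def Permutes {G : Type*} [Group G] (A B : Subgroup G) : Prop :=
  (A : Set G) * (B : Set G) = (B : Set G) * (A : Set G)

/-- A group is `σ`-nilpotent if it is a direct product of `σ`-primary groups. -/
def IsSigmaNilpotent {I : Type*} (σ : I → Set ℕ) (X : Type*) [Group X] : Prop :=
  ∃ (n : ℕ) (H : Fin n → GrpCat.{0}),
    (∀ i, Finite (H i)) ∧ (∀ i, IsSigmaPrimary σ (H i)) ∧
      Nonempty (X ≃* ((i : Fin n) → H i))

/-- `C_G(H/K)`: the set of all `g ∈ G` such that `⁅h, g⁆ ∈ K` for all `h ∈ H`,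
realized as the preimage in `G` of the centralizer of the image of `H` in `G ⧸ K`. -/
def quotCentralizer {G : Type*} [Group G] (H K : Subgroup G) (hK : K.Normal) :
    Subgroup G :=
  haveI := hK
  Subgroup.comap (QuotientGroup.mk' K)
    (Subgroup.centralizer ((H.map (QuotientGroup.mk' K) : Subgroup (G ⧸ K)) : Set (G ⧸ K)))

/-- `H/K` is a chief factor of `G`: `K < H` are normal subgroups of `G` with no
normal subgroup of `G` strictly between them. -/
def IsChiefFactor {G : Type*} [Group G] (H K : Subgroup G) : Prop :=
  K.Normal ∧ H.Normal ∧ K < H ∧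
    ∀ L : Subgroup G, L.Normal → K ≤ L → L ≤ H → L = K ∨ L = H

/-- A factor `H/K` (with `K` normal in `G`) is `σ`-central in `G`:
there is an `i` such that both `H/K` and `G/C_G(H/K)` are `σ i`-groups
(equivalently, `(H/K) ⋊ (G/C_G(H/K))` is `σ`-primary). -/
def IsSigmaCentral {I : Type*} (σ : I → Set ℕ) {G : Type*} [Group G]
    (H K : Subgroup G) (hK : K.Normal) : Prop :=
  ∃ i, IsPiGroup (σ i) (H ⧸ K.subgroupOf H) ∧
    IsPiGroup (σ i) (G ⧸ quotCentralizer H K hK)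

/-- A normal subgroup `E` of `G` is `σ`-hypercentral in `G` if either `E = 1` or
every chief factor of `G` below `E` is `σ`-central in `G`. -/
def IsSigmaHypercentral {I : Type*} (σ : I → Set ℕ) {G : Type*} [Group G]
    (E : Subgroup G) : Prop :=
  E.Normal ∧ (E = ⊥ ∨
    ∀ H K : Subgroup G, (hc : IsChiefFactor H K) → H ≤ E →
      IsSigmaCentral σ H K hc.1)

/-- The `σ`-hypercentre `Z_σ(G)`: the product of all `σ`-hypercentral normal
subgroups of `G`. -/
def sigmaHypercentre {I : Type*} (σ : I → Set ℕ) (G : Type*) [Group G] : Subgroup G :=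
  sSup {E : Subgroup G | IsSigmaHypercentral σ E}

/-- `O_π(X)`: the largest normal `π`-subgroup of `X` (the product of all normal
`π`-subgroups). -/
def piCore (π : Set ℕ) (X : Type*) [Group X] : Subgroup X :=
  sSup {N : Subgroup X | N.Normal ∧ IsPiGroup π N}

/-- `O^π(X)`: the smallest normal subgroup of `X` whose quotient is a `π`-group. -/
def piResidual (π : Set ℕ) (X : Type*) [Group X] : Subgroup X :=
  sInf {N : Subgroup X | N.Normal ∧ IsPiGroup π (X ⧸ N)}

/-- A family of subgroups forms an internal direct product decomposition of `X`. -/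
def IsInternalDirectProduct {X : Type*} [Group X] {ι : Type*}
    (N : ι → Subgroup X) : Prop :=
  (∀ i, (N i).Normal) ∧ iSupIndep N ∧ iSup N = ⊤

/-- `X` is `π`-decomposable: `X = O_π(X) × O_{π'}(X)` (internal direct product). -/
def IsPiDecomposable (π : Set ℕ) (X : Type*) [Group X] : Prop :=
  (piCore π X).Normal ∧ (piCore (primeCompl π) X).Normal ∧
    Disjoint (piCore π X) (piCore (primeCompl π) X) ∧
      piCore π X ⊔ piCore (primeCompl π) X = ⊤

/-- `X` is `π`-special for a finite set of primes `π = {p₁, …, pₙ}`: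
`X = O_{p₁}(X) × ⋯ × O_{pₙ}(X) × O_{π'}(X)` (internal direct product). -/
def IsPiSpecial (π : Finset ℕ) (X : Type*) [Group X] : Prop :=
  IsInternalDirectProduct (fun o : Option {p : ℕ // p ∈ π} =>
    o.elim (piCore (primeCompl ↑π) X) (fun p => piCore {(p : ℕ)} X))

/-- The chain condition of Corollary 1.3: each factor is normal or the
corresponding quotient is a `π₀`-group for some `π₀ ∈ {π, π'}`. -/
def IsPiPiPrimeSubnormal (π : Set ℕ) {G : Type*} [Group G] (A : Subgroup G) : Prop :=
  ∃ (n : ℕ) (c : Fin (n + 1) → Subgroup G),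
    c 0 = A ∧ c (Fin.last n) = ⊤ ∧
    ∀ i : Fin n,
      c i.castSucc ≤ c i.succ ∧
        (((c i.castSucc).subgroupOf (c i.succ)).Normal ∨
          ∃ π₀ ∈ ({π, primeCompl π} : Set (Set ℕ)),
            IsPiGroup π₀
              (c i.succ ⧸ ((c i.castSucc).subgroupOf (c i.succ)).normalCore))

/-- The chain condition of Corollary 1.4: each factor is normal or the
corresponding quotient is a `π'`-group. -/
def IsPiPrimeSubnormal (π : Set ℕ) {G : Type*} [Group G] (A : Subgroup G) : Prop :=
  ∃ (n : ℕ) (c : Fin (n + 1) → Subgroup G),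
    c 0 = A ∧ c (Fin.last n) = ⊤ ∧
    ∀ i : Fin n,
      c i.castSucc ≤ c i.succ ∧
        (((c i.castSucc).subgroupOf (c i.succ)).Normal ∨
          IsPiGroup (primeCompl π)
            (c i.succ ⧸ ((c i.castSucc).subgroupOf (c i.succ)).normalCore))

/-- The centralizer of (the carrier of) a normal subgroup is normal. -/
theorem centralizer_normal_of_normal {G : Type*} [Group G] {N : Subgroup G}
    (hN : N.Normal) : (Subgroup.centralizer (N : Set G)).Normal := by
  constructor
  intro g hg c
  rw [Subgroup.mem_centralizer_iff] at hg ⊢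
  intro s hs
  have hs' : c⁻¹ * s * c ∈ (N : Set G) := hN.conj_mem' s hs c
  have h := hg _ hs'
  have : c * ((c⁻¹ * s * c) * g) * c⁻¹ = c * (g * (c⁻¹ * s * c)) * c⁻¹ := by rw [h]
  calc s * (c * g * c⁻¹) = c * ((c⁻¹ * s * c) * g) * c⁻¹ := by group
    _ = c * (g * (c⁻¹ * s * c)) * c⁻¹ := this
    _ = (c * g * c⁻¹) * s := by group

/-- `C_G(H/K)` is normal in `G` whenever `H` and `K` are. -/
theorem quotCentralizer_normal {G : Type*} [Group G] {H K : Subgroup G}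
    (hK : K.Normal) (hH : H.Normal) : (quotCentralizer H K hK).Normal := by
  haveI := hK
  exact (centralizer_normal_of_normal
    (hH.map (QuotientGroup.mk' K) (QuotientGroup.mk'_surjective K))).comap _

/-!
Induction on `|G|`. Let `M` be the last proper term of a `σ`-subnormal chain through `A`; by
induction `A ≤ O_{σ_i}(M)`, which settles the case `M ⊴ G`. Otherwise `G / C` is a `σ_j`-group
for `C = M_G`, and either `A ≤ C` (induction in `C`) or `j = i`. If `R = O_{σ_i}(C) ≠ 1`, pass to
`G / R`. If `R = 1`, then `O_{σ_i}(M)` and `C` normalize each other and meet trivially, so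
`A ≤ O_{σ_i}(M) ≤ C_G(C)`; pass to `C_G(C)` unless `C` is central. In that case `C` is a
`σ_i'`-group, and a Schur–Zassenhaus complement of `C` is a normal `σ_i`-subgroup containing `A`.
-/

section PiGroup

variable {π : Set ℕ} {X Y : Type*}

theorem IsPiGroup.of_card_dvd (h : IsPiGroup π X) (hd : Nat.card Y ∣ Nat.card X) :
    IsPiGroup π Y :=
  fun p hp hpY => h p hp (hpY.trans hd)

theorem IsPiGroup.mono {π' : Set ℕ} (h : IsPiGroup π X) (hπ : π ⊆ π') : IsPiGroup π' X :=
  fun p hp hd => hπ (h p hp hd)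

theorem IsPiGroup.card_eq_one (h : IsPiGroup π X) (h' : IsPiGroup (primeCompl π) X) :
    Nat.card X = 1 :=
  Nat.eq_one_iff_not_exists_prime_dvd.mpr fun p hp hd => (h' p hp hd).2 (h p hp hd)

theorem IsPiGroup.coprime_card (h : IsPiGroup π X) (h' : IsPiGroup (primeCompl π) Y) :
    (Nat.card X).Coprime (Nat.card Y) :=
  Nat.coprime_of_dvd fun p hp hX hY => (h' p hp hY).2 (h p hp hX)

variable [Group X] [Group Y]

theorem isPiGroup_bot : IsPiGroup π (⊥ : Subgroup X) := by
  intro p hp hd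
  rw [card_bot, Nat.dvd_one] at hd
  exact absurd hd hp.ne_one

theorem IsPiGroup.of_ker_of_range (f : X →* Y) (hker : IsPiGroup π f.ker)
    (hrange : IsPiGroup π f.range) : IsPiGroup π X := by
  intro p hp hd
  rw [← f.ker.card_mul_index, index_ker] at hd
  exact (hp.dvd_mul.mp hd).elim (hker p hp) (hrange p hp)

theorem IsPiGroup.of_ker_of_map (f : X →* Y) {H : Subgroup X} (hker : IsPiGroup π f.ker)
    (hmap : IsPiGroup π (H.map f)) : IsPiGroup π H := by
  refine .of_ker_of_range (f.domRestrict H) ?_ (by rwa [MonoidHom.domRestrict_range])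
  rw [MonoidHom.ker_domRestrict]
  exact hker.of_card_dvd (card_comap_dvd_of_injective _ _ H.subtype_injective)

theorem IsPiGroup.map {H : Subgroup X} (h : IsPiGroup π H) (f : X →* Y) :
    IsPiGroup π (H.map f) :=
  h.of_card_dvd (card_map_dvd H f)

theorem IsPiGroup.subgroupOf {H K : Subgroup X} (h : IsPiGroup π H) (hHK : H ≤ K) :
    IsPiGroup π (H.subgroupOf K) :=
  h.of_card_dvd (Nat.card_congr (subgroupOfEquivOfLe hHK).toEquiv).dvd

theorem IsPiGroup.sup_of_normal {N K : Subgroup X} [N.Normal] (hN : IsPiGroup π N)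
    (hK : IsPiGroup π K) : IsPiGroup π ↥(N ⊔ K) := by
  refine .of_ker_of_map (QuotientGroup.mk' N) (by rwa [QuotientGroup.ker_mk']) ?_
  rw [Subgroup.map_sup, QuotientGroup.map_mk'_self, bot_sup_eq]
  exact hK.map _

theorem le_of_isPiGroup_of_isPiGroup_quotient {H N : Subgroup X} [N.Normal]
    (hH : IsPiGroup π H) (hN : IsPiGroup (primeCompl π) (X ⧸ N)) : H ≤ N := by
  have hmap : Nat.card (H.map (QuotientGroup.mk' N)) = 1 :=
    (hH.map _).card_eq_one (hN.of_card_dvd (card_subgroup_dvd_card _))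
  rw [card_eq_one, Subgroup.map_eq_bot_iff, QuotientGroup.ker_mk'] at hmap
  exact hmap

end PiGroup

section PiCore

variable (π : Set ℕ) {X Y : Type*} [Group X] [Group Y]

theorem le_piCore {N : Subgroup X} (hN : N.Normal) (hπ : IsPiGroup π N) : N ≤ piCore π X :=
  le_sSup ⟨hN, hπ⟩

theorem piCore_normal_and_isPiGroup [Finite X] :
    (piCore π X).Normal ∧ IsPiGroup π (piCore π X) := by
  let S := {N : Subgroup X | N.Normal ∧ IsPiGroup π N}
  have hS : piCore π X = (Set.toFinite S).toFinset.sup id := by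
    rw [Finset.sup_id_eq_sSup, Set.Finite.coe_toFinset]; rfl
  rw [hS]
  refine Finset.sup_induction (p := fun N : Subgroup X => N.Normal ∧ IsPiGroup π N)
    ⟨inferInstance, isPiGroup_bot⟩ ?_ fun N hN => (Set.toFinite S).mem_toFinset.mp hN
  rintro N ⟨hN, hNπ⟩ K ⟨hK, hKπ⟩
  exact ⟨Subgroup.sup_normal N K, hNπ.sup_of_normal hKπ⟩

instance piCore_normal [Finite X] : (piCore π X).Normal := (piCore_normal_and_isPiGroup π).1

theorem isPiGroup_piCore [Finite X] : IsPiGroup π (piCore π X) :=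
  (piCore_normal_and_isPiGroup π).2

instance piCore_characteristic [Finite X] : (piCore π X).Characteristic :=
  characteristic_iff_map_le.mpr fun φ =>
    le_piCore π ((piCore_normal π).map _ φ.surjective)
      ((isPiGroup_piCore π).map _)

theorem map_subtype_piCore_le [Finite X] (K : Subgroup X) [K.Normal] :
    (piCore π K).map K.subtype ≤ piCore π X :=
  le_piCore π inferInstance ((isPiGroup_piCore π).map _)

theorem le_piCore_of_map_le [Finite X] {A R : Subgroup X} [R.Normal] (hR : IsPiGroup π R)
    (hA : A.map (QuotientGroup.mk' R) ≤ piCore π (X ⧸ R)) : A ≤ piCore π X := by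
  refine (map_le_iff_le_comap.mp hA).trans (le_piCore π inferInstance ?_)
  refine .of_ker_of_map (QuotientGroup.mk' R) (by rwa [QuotientGroup.ker_mk']) ?_
  rw [map_comap_eq_self_of_surjective (QuotientGroup.mk'_surjective R)]
  exact isPiGroup_piCore π

theorem inf_le_map_subtype_piCore [Finite X] {D K : Subgroup X} (hD : IsPiGroup π D)
    (hKD : K ≤ normalizer (D : Set X)) : D ⊓ K ≤ (piCore π K).map K.subtype := by
  have hπ : IsPiGroup π (D.subgroupOf K) := by
    rw [← inf_subgroupOf_right]
    exact (hD.of_card_dvd (card_dvd_of_le inf_le_left)).subgroupOf inf_le_right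
  have := map_mono (f := K.subtype) (le_piCore π (normal_subgroupOf_of_le_normalizer hKD) hπ)
  rwa [subgroupOf_map_subtype] at this

end PiCore

section Center

variable {π : Set ℕ} {G : Type*} [Group G]

theorem le_normalizer_map_subtype (K : Subgroup G) (H : Subgroup K) [H.Normal] :
    K ≤ normalizer (H.map K.subtype : Set G) := by
  have := le_normalizer_map (H := H) K.subtype
  rwa [normalizer_eq_top, ← MonoidHom.range_eq_map, range_subtype] at this

theorem le_centralizer_of_inf_eq_bot {D C : Subgroup G} (hDC : D ⊓ C = ⊥)
    (hCD : C ≤ normalizer (D : Set G)) (hDC' : D ≤ normalizer (C : Set G)) :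
    D ≤ centralizer (C : Set G) := by
  intro d hd
  refine Subgroup.mem_centralizer_iff.mpr fun c hc => ?_
  have hD : c * d * c⁻¹ * d⁻¹ ∈ D :=
    mul_mem ((mem_normalizer_iff.mp (hCD hc) d).mp hd) (inv_mem hd)
  have hC : c * d * c⁻¹ * d⁻¹ ∈ C := by
    simpa only [mul_assoc] using mul_mem hc ((mem_normalizer_iff.mp (hDC' hd) c⁻¹).mp (inv_mem hc))
  have hcomm : c * d * c⁻¹ * d⁻¹ = 1 := by
    rw [← mem_bot, ← hDC]
    exact ⟨hD, hC⟩
  rwa [mul_inv_eq_one, mul_inv_eq_iff_eq_mul] at hcomm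

theorem le_piCore_of_le_center {A C : Subgroup G} [C.Normal] (hCZ : C ≤ center G)
    (hC : IsPiGroup (primeCompl π) C) (hGC : IsPiGroup π (G ⧸ C)) (hA : IsPiGroup π A) :
    A ≤ piCore π G := by
  obtain ⟨H, hCH⟩ := exists_right_complement'_of_coprime (N := C)
    (by rw [index_eq_card]; exact (hGC.coprime_card hC).symm)
  have hH : H.Normal := by
    rw [← normalizer_eq_top_iff, eq_top_iff, ← hCH.sup_eq_top]
    exact sup_le (hCZ.trans (center_le_normalizer _)) le_normalizer
  have hHπ : IsPiGroup π H := hGC.of_card_dvd (by rw [← index_eq_card, hCH.symm.index_eq_card])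
  have hAH : A ≤ H := le_of_isPiGroup_of_isPiGroup_quotient hA
    (hC.of_card_dvd (by rw [← index_eq_card, hCH.index_eq_card]))
  exact hAH.trans (le_piCore π hH hHπ)

variable [Finite G]

theorem isPiGroup_primeCompl_of_le_center {C : Subgroup G} (hCZ : C ≤ center G)
    (hC : piCore π C = ⊥) : IsPiGroup (primeCompl π) C := by
  intro p hp hpC
  refine ⟨hp, fun hpπ => ?_⟩
  have : Fact p.Prime := ⟨hp⟩
  obtain ⟨x, hx⟩ := exists_prime_orderOf_dvd_card' p hpC
  have hnormal : (zpowers x).Normal := by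
    refine ⟨fun n hn g => ?_⟩
    obtain ⟨k, rfl⟩ := mem_zpowers_iff.mp hn
    have hgx : Commute g x := Subtype.ext (mem_center_iff.mp (hCZ x.2) g)
    rwa [(hgx.zpow_right k).eq, mul_inv_cancel_right]
  have hπ : IsPiGroup π (zpowers x) := by
    intro q hq hqx
    rw [Nat.card_zpowers, hx, Nat.prime_dvd_prime_iff_eq hq hp] at hqx
    exact hqx ▸ hpπ
  have hx1 : x = 1 := by
    simpa only [hC, le_bot_iff, zpowers_eq_bot] using le_piCore π hnormal hπ
  exact hp.ne_one (by rw [← hx, hx1, orderOf_one])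

end Center

section SigmaSubnormal

variable {I : Type*} {σ : I → Set ℕ}

theorem IsSigmaPrimary.of_card_dvd {X Y : Type*} (h : IsSigmaPrimary σ X)
    (hd : Nat.card Y ∣ Nat.card X) : IsSigmaPrimary σ Y :=
  let ⟨j, hj⟩ := h; ⟨j, hj.of_card_dvd hd⟩

variable {K L : Type*} [Group K] [Group L]

/-- The condition on one step `A_{k-1} ≤ A_k` of a `σ`-subnormal chain, for `S = A_{k-1}` seen
as a subgroup of `K = A_k`. -/
def IsSigmaSubnormalLink (σ : I → Set ℕ) (S : Subgroup K) : Prop :=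
  S.Normal ∨ IsSigmaPrimary σ (K ⧸ S.normalCore)

theorem comap_normalCore_le (S : Subgroup L) (f : K →* L) :
    S.normalCore.comap f ≤ (S.comap f).normalCore :=
  normal_le_normalCore.mpr (comap_mono S.normalCore_le)

theorem IsSigmaSubnormalLink.comap {S : Subgroup L} (h : IsSigmaSubnormalLink σ S)
    (f : K →* L) : IsSigmaSubnormalLink σ (S.comap f) := by
  refine h.imp (fun hS => hS.comap f) fun hS => hS.of_card_dvd ?_
  rw [← index_eq_card, ← index_eq_card]
  refine (index_dvd_of_le (comap_normalCore_le S f)).trans ?_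
  rw [index_comap]
  exact relIndex_dvd_index_of_normal _ _

theorem IsSigmaSubnormalLink.map {S : Subgroup K} (h : IsSigmaSubnormalLink σ S) {f : K →* L}
    (hf : Function.Surjective f) : IsSigmaSubnormalLink σ (S.map f) := by
  refine h.imp (fun hS => hS.map f hf) fun hS => hS.of_card_dvd ?_
  rw [← index_eq_card, ← index_eq_card, ← index_comap_of_surjective _ hf]
  refine index_dvd_of_le (map_le_iff_le_comap.mp ?_)
  have : (S.normalCore.map f).Normal := (normalCore_normal S).map f hf
  exact normal_le_normalCore.mpr (map_mono S.normalCore_le)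

variable {G G' : Type*} [Group G] [Group G']

theorem IsSigmaSubnormal.subgroupOf {A : Subgroup G} (hA : IsSigmaSubnormal σ A)
    (H : Subgroup G) : IsSigmaSubnormal σ (A.subgroupOf H) := by
  obtain ⟨n, c, hc0, hcn, hc⟩ := hA
  refine ⟨n, fun k => (c k).subgroupOf H, by simp only [hc0], by simp only [hcn, top_subgroupOf],
    fun k => ⟨subgroupOf_mono H (hc k).1, ?_⟩⟩
  exact IsSigmaSubnormalLink.comap (hc k).2
    ((H.subtype.comp ((c k.succ).subgroupOf H).subtype).codRestrict (c k.succ) fun x => x.2)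

theorem IsSigmaSubnormal.map {A : Subgroup G} (hA : IsSigmaSubnormal σ A) {f : G →* G'}
    (hf : Function.Surjective f) : IsSigmaSubnormal σ (A.map f) := by
  obtain ⟨n, c, hc0, hcn, hc⟩ := hA
  refine ⟨n, fun k => (c k).map f, by simp only [hc0],
    by simp only [hcn, ← MonoidHom.range_eq_map, MonoidHom.range_eq_top.mpr hf],
    fun k => ⟨map_mono (hc k).1, ?_⟩⟩
  show IsSigmaSubnormalLink σ (((c k.castSucc).map f).subgroupOf ((c k.succ).map f))
  convert IsSigmaSubnormalLink.map (hc k).2 (f.subgroupMap_surjective (c k.succ)) using 2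
  ext ⟨y, hy⟩
  simp only [mem_subgroupOf, mem_map, Subtype.ext_iff, MonoidHom.subgroupMap_apply_coe,
    Subtype.exists, exists_prop]
  exact ⟨fun ⟨x, hx, hxy⟩ => ⟨x, (hc k).1 hx, hx, hxy⟩, fun ⟨x, _, hx, hxy⟩ => ⟨x, hx, hxy⟩⟩

theorem IsSigmaSubnormal.eq_top_or_exists_link {A : Subgroup G} (hA : IsSigmaSubnormal σ A) :
    A = ⊤ ∨ ∃ M : Subgroup G, M ≠ ⊤ ∧ A ≤ M ∧ IsSigmaSubnormalLink σ M := by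
  obtain ⟨n, c, rfl, hcn, hc⟩ := hA
  induction n with
  | zero => exact .inl hcn
  | succ m ih =>
    by_cases hM : c (Fin.last m).castSucc = ⊤
    · exact ih (fun k => c k.castSucc) hM fun k => by
        simpa only [Fin.succ_castSucc] using hc k.castSucc
    · refine .inr ⟨_, hM, Fin.monotone_iff_le_succ.mpr (fun k => (hc k).1) (Fin.zero_le _), ?_⟩
      have hlink := (hc (Fin.last m)).2
      rw [Fin.succ_last, hcn] at hlink
      exact IsSigmaSubnormalLink.comap hlink topEquiv.symm.toMonoidHom

end SigmaSubnormal

theorem card_lt_card_of_ne_top {G : Type*} [Group G] [Finite G] {H : Subgroup G} (hH : H ≠ ⊤) :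
    Nat.card H < Nat.card G := by
  rw [← H.card_mul_index]
  exact lt_mul_of_one_lt_right Nat.card_pos (one_lt_index_of_ne_top hH)

theorem card_quotient_lt_card {G : Type*} [Group G] [Finite G] {N : Subgroup G} (hN : N ≠ ⊥) :
    Nat.card (G ⧸ N) < Nat.card G := by
  rw [card_eq_card_quotient_mul_card_subgroup N]
  exact lt_mul_of_one_lt_right Nat.card_pos ((one_lt_card_iff_ne_bot N).mpr hN)

universe u

section Main

variable {I : Type*} {σ : I → Set ℕ} {i j : I}

theorem IsPrimePartition.subset_primeCompl (hσ : IsPrimePartition σ) (hji : j ≠ i) :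
    σ j ⊆ primeCompl (σ i) :=
  fun p hp => ⟨hσ.1 j p hp, fun hpi => hji ((hσ.2 p (hσ.1 j p hp)).unique hp hpi)⟩

theorem IsPrimePartition.eq_of_not_le {G : Type*} [Group G] (hσ : IsPrimePartition σ)
    {A N : Subgroup G} [N.Normal] (hA : IsPiGroup (σ i) A) (hN : IsPiGroup (σ j) (G ⧸ N))
    (hAN : ¬A ≤ N) : j = i := by
  by_contra hji
  exact hAN (le_of_isPiGroup_of_isPiGroup_quotient hA (hN.mono (hσ.subset_primeCompl hji)))

def SigmaSubnormalLePiCore (σ : I → Set ℕ) (i : I) (H : Type*) [Group H] : Prop :=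
  ∀ B : Subgroup H, IsSigmaSubnormal σ B → IsPiGroup (σ i) B → B ≤ piCore (σ i) H

variable {G : Type u} [Group G] {A : Subgroup G}

theorem SigmaSubnormalLePiCore.le_map_subtype {K : Subgroup G}
    (hK : SigmaSubnormalLePiCore σ i K) (hA : IsSigmaSubnormal σ A) (hAi : IsPiGroup (σ i) A)
    (hAK : A ≤ K) : A ≤ (piCore (σ i) K).map K.subtype :=
  map_subgroupOf_eq_of_le hAK ▸ map_mono (hK _ (hA.subgroupOf K) (hAi.subgroupOf hAK))

variable [Finite G]

theorem SigmaSubnormalLePiCore.le_of_le_normal {K : Subgroup G} [K.Normal]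
    (hK : SigmaSubnormalLePiCore σ i K) (hA : IsSigmaSubnormal σ A) (hAi : IsPiGroup (σ i) A)
    (hAK : A ≤ K) : A ≤ piCore (σ i) G :=
  (hK.le_map_subtype hA hAi hAK).trans (map_subtype_piCore_le _ K)

theorem SigmaSubnormalLePiCore.le_of_quotient {R : Subgroup G} [R.Normal]
    (hR : SigmaSubnormalLePiCore σ i (G ⧸ R)) (hRi : IsPiGroup (σ i) R)
    (hA : IsSigmaSubnormal σ A) (hAi : IsPiGroup (σ i) A) : A ≤ piCore (σ i) G :=
  le_piCore_of_map_le _ hRi (hR _ (hA.map (QuotientGroup.mk'_surjective R)) (hAi.map _))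

theorem le_piCore_of_isPiGroup_quotient_normalCore {M : Subgroup G}
    (ih : ∀ (H : Type u) [Group H] [Finite H], Nat.card H < Nat.card G →
      SigmaSubnormalLePiCore σ i H)
    (hA : IsSigmaSubnormal σ A) (hAi : IsPiGroup (σ i) A)
    (hAM : A ≤ (piCore (σ i) M).map M.subtype) (hGM : IsPiGroup (σ i) (G ⧸ M.normalCore)) :
    A ≤ piCore (σ i) G := by
  set C := M.normalCore
  set D := (piCore (σ i) M).map M.subtype
  by_cases hR : (piCore (σ i) C).map C.subtype = ⊥
  · have hCD : C ≤ normalizer (D : Set G) := M.normalCore_le.trans (le_normalizer_map_subtype M _)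
    have hDC : D ⊓ C = ⊥ :=
      le_bot_iff.mp <| hR ▸ inf_le_map_subtype_piCore _ ((isPiGroup_piCore _).map _) hCD
    have hDZ : D ≤ centralizer (C : Set G) :=
      le_centralizer_of_inf_eq_bot hDC hCD le_normalizer_of_normal
    by_cases hZ : centralizer (C : Set G) = ⊤
    · have hCZ : C ≤ center G := fun c hc => mem_center_iff.mpr fun g =>
        (mem_centralizer_iff.mp (hZ ▸ mem_top g : g ∈ centralizer (C : Set G)) c hc).symm
      have hC : piCore (σ i) C = ⊥ := (map_eq_bot_iff_of_injective _ C.subtype_injective).mp hR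
      exact le_piCore_of_le_center hCZ (isPiGroup_primeCompl_of_le_center hCZ hC) hGM hAi
    · have := centralizer_normal_of_normal (normalCore_normal M)
      exact (ih _ (card_lt_card_of_ne_top hZ)).le_of_le_normal hA hAi (hAM.trans hDZ)
  · exact (ih _ (card_quotient_lt_card hR)).le_of_quotient ((isPiGroup_piCore _).map _) hA hAi

end Main

theorem sigmaSubnormalLePiCore {I : Type*} {σ : I → Set ℕ} (hσ : IsPrimePartition σ) (i : I)
    (G : Type u) [Group G] [Finite G] : SigmaSubnormalLePiCore σ i G := by
  induction hn : Nat.card G using Nat.strong_induction_on generalizing G with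
  | _ n ih =>
  have ih' : ∀ (H : Type u) [Group H] [Finite H], Nat.card H < Nat.card G →
      SigmaSubnormalLePiCore σ i H := fun H _ _ hH => ih _ (hn ▸ hH) H rfl
  intro A hA hAi
  obtain rfl | ⟨M, hM, hAM, hlink⟩ := hA.eq_top_or_exists_link
  · exact le_piCore _ inferInstance hAi
  obtain hMn | ⟨j, hj⟩ := hlink
  · exact (ih' M (card_lt_card_of_ne_top hM)).le_of_le_normal hA hAi hAM
  by_cases hAC : A ≤ M.normalCore
  · have hC := card_lt_card_of_ne_top (ne_top_of_le_ne_top hM M.normalCore_le)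
    exact (ih' _ hC).le_of_le_normal hA hAi hAC
  have hGM : IsPiGroup (σ i) (G ⧸ M.normalCore) := hσ.eq_of_not_le hAi hj hAC ▸ hj
  exact le_piCore_of_isPiGroup_quotient_normalCore ih' hA hAi
    ((ih' M (card_lt_card_of_ne_top hM)).le_map_subtype hA hAi hAM) hGM

/-- A `σ`-subnormal `σ i`-subgroup of `G` is contained in
`O_{σ i}(G)`, the largest normal `σ i`-subgroup of `G`. -/
theorem sigmaSubnormal_le_piCore {I : Type*} (σ : I → Set ℕ)
    (hσ : IsPrimePartition σ) {G : Type*} [Group G] [Finite G] (A : Subgroup G)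
    (hA : IsSigmaSubnormal σ A) (i : I) (hAi : IsPiGroup (σ i) A) :
    A ≤ piCore (σ i) G :=
  sigmaSubnormalLePiCore hσ i G A hA hAi
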